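/- Let ρ_AB be a density matrix on H_A ⊗ H_B with ρ_B = tr_A ρ_AB invertible, and define Φ(X) := ρ_B^{1/2} (ρ_B^{-1/2} ρ_AB ρ_B^{-1/2})^{1/2} ρ_B^{-1/2} X ρ_B^{-1/2} (ρ_B^{-1/2} ρ_AB ρ_B^{-1/2})^{1/2} ρ_B^{1/2} for X an operator on H_B. Then for every positive semidefinite X on H_B, tr[Φ(X)] ≤ d_A · ‖ρ_B^{-1}‖_∞ · tr[X], where d_A = dim H_A and ‖·‖_∞ is the operator norm. -/

import Mathlib

open Matrix BigOperators
open scoped Kronecker ComplexOrder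

noncomputable section

/-- The positive semidefinite square root of a positive semidefinite matrix
(the Mathlib definition of December 2024, since removed from Mathlib). -/
def Matrix.PosSemidef.sqrt {n 𝕜 : Type*} [Fintype n] [RCLike 𝕜] [DecidableEq n]
    {A : Matrix n n 𝕜} (hA : A.PosSemidef) : Matrix n n 𝕜 :=
  hA.1.eigenvectorUnitary.1 * diagonal ((↑) ∘ (√·) ∘ hA.1.eigenvalues) *
  (star hA.1.eigenvectorUnitary : Matrix n n 𝕜)

lemma Matrix.PosSemidef.posSemidef_sqrt {n 𝕜 : Type*} [Fintype n] [RCLike 𝕜] [DecidableEq n]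
    {A : Matrix n n 𝕜} (hA : A.PosSemidef) : hA.sqrt.PosSemidef := by
  have hD : (diagonal ((↑) ∘ (√·) ∘ hA.1.eigenvalues) : Matrix n n 𝕜).PosSemidef := by
    refine posSemidef_diagonal_iff.mpr fun i => ?_
    rw [Function.comp_apply, RCLike.nonneg_iff]
    constructor
    · simp only [Function.comp_apply, RCLike.ofReal_re]
      exact Real.sqrt_nonneg _
    · simp only [Function.comp_apply, RCLike.ofReal_im]
  have h := hD.mul_mul_conjTranspose_same (hA.1.eigenvectorUnitary : Matrix n n 𝕜)
  unfold Matrix.PosSemidef.sqrt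
  rwa [Matrix.star_eq_conjTranspose]

lemma Matrix.PosSemidef.sqrt_mul_self {n 𝕜 : Type*} [Fintype n] [RCLike 𝕜] [DecidableEq n]
    {A : Matrix n n 𝕜} (hA : A.PosSemidef) : hA.sqrt * hA.sqrt = A := by
  unfold Matrix.PosSemidef.sqrt
  have hU : (star hA.1.eigenvectorUnitary : Matrix n n 𝕜) * hA.1.eigenvectorUnitary.1 = 1 :=
    Unitary.star_mul_self_of_mem hA.1.eigenvectorUnitary.2
  have hDD : (diagonal ((↑) ∘ (√·) ∘ hA.1.eigenvalues) : Matrix n n 𝕜) *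
      diagonal ((↑) ∘ (√·) ∘ hA.1.eigenvalues) = diagonal (RCLike.ofReal ∘ hA.1.eigenvalues) := by
    rw [diagonal_mul_diagonal]
    congr 1; funext i
    simp only [Function.comp_apply, ← RCLike.ofReal_mul]
    rw [Real.mul_self_sqrt (hA.eigenvalues_nonneg i)]
  calc _ = hA.1.eigenvectorUnitary.1 * ((diagonal ((↑) ∘ (√·) ∘ hA.1.eigenvalues) *
        ((star hA.1.eigenvectorUnitary : Matrix n n 𝕜) * hA.1.eigenvectorUnitary.1)) *
        diagonal ((↑) ∘ (√·) ∘ hA.1.eigenvalues)) *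
        (star hA.1.eigenvectorUnitary : Matrix n n 𝕜) := by simp only [mul_assoc]
    _ = A := by
      rw [hU, mul_one, hDD]
      conv_rhs => rw [hA.1.spectral_theorem, Unitary.conjStarAlgAut_apply]

namespace BSQMC

variable {A B : Type*} [Fintype A] [Fintype B] [DecidableEq A] [DecidableEq B]

/-- Partial trace over the `A` system (bipartite). -/
def ptA2 (M : Matrix (A × B) (A × B) ℂ) : Matrix B B ℂ :=
  Matrix.of fun b b' => ∑ a : A, M (a, b) (a, b')

/-- `X_B ↦ I_A ⊗ X_B` (bipartite). -/
def embB2 (X : Matrix B B ℂ) : Matrix (A × B) (A × B) ℂ :=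
  Matrix.of fun p q => (if p.1 = q.1 then (1 : ℂ) else 0) * X p.2 q.2

/-- The operator (spectral) norm `‖·‖_∞` of a matrix, via its action on Euclidean space. -/
def opNorm {n : Type*} [Fintype n] [DecidableEq n] (M : Matrix n n ℂ) : ℝ :=
  ‖LinearMap.toContinuousLinearMap (Matrix.toEuclideanLin M)‖

/-- The trace norm `‖·‖_1` of a matrix: the sum of its singular values. -/
def traceNorm {n : Type*} [Fintype n] [DecidableEq n] (M : Matrix n n ℂ) : ℝ :=
  ∑ i, Real.sqrt ((Matrix.posSemidef_conjTranspose_mul_self M).isHermitian.eigenvalues i)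

/-- The Frobenius (Hilbert-Schmidt) norm `‖·‖_2` of a matrix. -/
def frobNorm {n : Type*} [Fintype n] [DecidableEq n] (M : Matrix n n ℂ) : ℝ :=
  Real.sqrt ((Mᴴ * M).trace).re

section Aux

set_option linter.unusedSectionVars false

variable {n : Type*} [Fintype n] [DecidableEq n]

lemma sum_normSq_col (Q : Matrix n n ℂ) (j : n) :
    ∑ i, ‖Q i j‖^2 = ((Qᴴ * Q) j j).re := by
  simp only [Matrix.mul_apply, Matrix.conjTranspose_apply, Complex.re_sum]
  congr 1; ext i
  rw [Complex.star_def, Complex.conj_mul']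
  rw [← Complex.ofReal_pow, Complex.ofReal_re]

lemma diag_le_opNorm (P Q : Matrix n n ℂ) (j : n) :
    ((Qᴴ * (P * Q)) j j).re ≤ opNorm P * ((Qᴴ * Q) j j).re := by
  classical
  set v : EuclideanSpace ℂ n := (WithLp.equiv 2 (n → ℂ)).symm (fun i => Q i j) with hv
  have hinner : (inner ℂ v (Matrix.toEuclideanLin P v) : ℂ) = (Qᴴ * (P * Q)) j j := by
    rw [Matrix.toEuclideanLin_apply]
    simp [PiLp.inner_apply, RCLike.inner_apply, Matrix.mul_apply, Matrix.conjTranspose_apply,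
      Matrix.mulVec, dotProduct, hv]
    exact Finset.sum_congr rfl fun _ _ => mul_comm _ _
  have hvnorm : ‖v‖^2 = ((Qᴴ * Q) j j).re := by
    rw [EuclideanSpace.norm_eq, Real.sq_sqrt (by positivity), ← sum_normSq_col Q j]
    rfl
  calc ((Qᴴ * (P * Q)) j j).re = (inner ℂ v (Matrix.toEuclideanLin P v) : ℂ).re := by rw [hinner]
    _ ≤ ‖(inner ℂ v (Matrix.toEuclideanLin P v) : ℂ)‖ := Complex.re_le_norm _
    _ ≤ ‖v‖ * ‖Matrix.toEuclideanLin P v‖ := norm_inner_le_norm _ _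
    _ ≤ ‖v‖ * (opNorm P * ‖v‖) :=
        mul_le_mul_of_nonneg_left
          ((LinearMap.toContinuousLinearMap (Matrix.toEuclideanLin P)).le_opNorm v)
          (norm_nonneg _)
    _ = opNorm P * ‖v‖^2 := by ring
    _ = _ := by rw [hvnorm]

lemma trace_re_eq_sum (M : Matrix n n ℂ) : (M.trace).re = ∑ j, (M j j).re := by
  rw [Matrix.trace]; exact Complex.re_sum _ _

lemma trace_conjTranspose_mul_re (Q : Matrix n n ℂ) :
    ((Qᴴ * Q).trace).re = ∑ j, ∑ i, ‖Q i j‖^2 := by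
  rw [trace_re_eq_sum]
  exact Finset.sum_congr rfl fun j _ => (sum_normSq_col Q j).symm

lemma trace_mul_le_opNorm (P K : Matrix n n ℂ) (hK : K.PosSemidef) :
    ((P * K).trace).re ≤ opNorm P * (K.trace).re := by
  set Q := hK.sqrt with hQ
  have hQH : Qᴴ = Q := hK.posSemidef_sqrt.1
  have h1 : (P * K).trace = (Qᴴ * (P * Q)).trace := by
    rw [hQH]
    conv_rhs => rw [Matrix.trace_mul_comm, mul_assoc, hK.sqrt_mul_self]
  have h2 : (Qᴴ * Q).trace = K.trace := by rw [hQH, hK.sqrt_mul_self]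
  calc ((P * K).trace).re = ((Qᴴ * (P * Q)).trace).re := by rw [h1]
    _ = ∑ j, ((Qᴴ * (P * Q)) j j).re := trace_re_eq_sum _
    _ ≤ ∑ j, opNorm P * ((Qᴴ * Q) j j).re :=
        Finset.sum_le_sum fun j _ => diag_le_opNorm P Q j
    _ = opNorm P * ((Qᴴ * Q).trace).re := by rw [trace_re_eq_sum, Finset.mul_sum]
    _ = opNorm P * (K.trace).re := by rw [h2]

lemma entry_sq_le (Ap Bq : Matrix n n ℂ) (i j : n) :
    ‖(Ap * Bq) i j‖^2 ≤ (∑ k, ‖Ap i k‖^2) * (∑ k, ‖Bq k j‖^2) := by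
  set x : EuclideanSpace ℂ n := (WithLp.equiv 2 (n → ℂ)).symm (fun k => (starRingEnd ℂ) (Ap i k)) with hx
  set y : EuclideanSpace ℂ n := (WithLp.equiv 2 (n → ℂ)).symm (fun k => Bq k j) with hy
  have hxy : (inner ℂ x y : ℂ) = (Ap * Bq) i j := by
    simp [PiLp.inner_apply, RCLike.inner_apply, Matrix.mul_apply, hx, hy]
    exact Finset.sum_congr rfl fun _ _ => mul_comm _ _
  have hxn : ‖x‖^2 = ∑ k, ‖Ap i k‖^2 := by
    rw [EuclideanSpace.norm_eq, Real.sq_sqrt (by positivity)]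
    simp [hx]
  have hyn : ‖y‖^2 = ∑ k, ‖Bq k j‖^2 := by
    rw [EuclideanSpace.norm_eq, Real.sq_sqrt (by positivity)]; rfl
  calc ‖(Ap * Bq) i j‖^2 = ‖(inner ℂ x y : ℂ)‖^2 := by rw [hxy]
    _ ≤ (‖x‖ * ‖y‖)^2 := by
        have := norm_inner_le_norm (𝕜 := ℂ) x y
        exact pow_le_pow_left₀ (norm_nonneg _) this 2
    _ = ‖x‖^2 * ‖y‖^2 := by ring
    _ = _ := by rw [hxn, hyn]

lemma trace_mul_le_trace {P K : Matrix n n ℂ} (hP : P.PosSemidef) (hK : K.PosSemidef) :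
    ((P * K).trace).re ≤ (P.trace).re * (K.trace).re := by
  set Ap := hP.sqrt with hAp
  set Bq := hK.sqrt with hBq
  have hApH : Apᴴ = Ap := hP.posSemidef_sqrt.1
  have hBqH : Bqᴴ = Bq := hK.posSemidef_sqrt.1
  have h1 : ((Ap * Bq)ᴴ * (Ap * Bq)).trace = (P * K).trace := by
    rw [conjTranspose_mul, hApH, hBqH, Matrix.trace_mul_comm]
    rw [show (Ap * Bq) * (Bq * Ap) = (Ap * (Bq * Bq)) * Ap by simp only [mul_assoc]]
    rw [Matrix.trace_mul_comm]
    rw [show Ap * (Ap * (Bq * Bq)) = (Ap * Ap) * (Bq * Bq) by simp only [mul_assoc]]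
    rw [hP.sqrt_mul_self, hK.sqrt_mul_self]
  have hPtr : (P.trace).re = ∑ j, ∑ i, ‖Ap i j‖^2 := by
    have h : Apᴴ * Ap = P := by rw [hApH, hP.sqrt_mul_self]
    rw [← h]; exact trace_conjTranspose_mul_re Ap
  have hKtr : (K.trace).re = ∑ j, ∑ i, ‖Bq i j‖^2 := by
    have h : Bqᴴ * Bq = K := by rw [hBqH, hK.sqrt_mul_self]
    rw [← h]; exact trace_conjTranspose_mul_re Bq
  calc ((P * K).trace).re = (((Ap * Bq)ᴴ * (Ap * Bq)).trace).re := by rw [h1]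
    _ = ∑ j, ∑ i, ‖(Ap * Bq) i j‖^2 := trace_conjTranspose_mul_re _
    _ ≤ ∑ j, ∑ i, (∑ k, ‖Ap i k‖^2) * (∑ k, ‖Bq k j‖^2) :=
        Finset.sum_le_sum fun j _ => Finset.sum_le_sum fun i _ => entry_sq_le Ap Bq i j
    _ = (∑ i, ∑ k, ‖Ap i k‖^2) * (∑ j, ∑ k, ‖Bq k j‖^2) := by
        rw [Finset.sum_comm, ← Finset.sum_mul_sum]
    _ = (P.trace).re * (K.trace).re := by
        rw [hPtr, hKtr]
        refine congrArg (· * _) ?_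
        exact Finset.sum_comm

end Aux

section Bipartite

set_option linter.unusedSectionVars false

lemma embB2_mul (X Y : Matrix B B ℂ) :
    embB2 (A := A) (X * Y) = embB2 X * embB2 Y := by
  ext ⟨a, b⟩ ⟨a', b'⟩
  simp only [embB2, Matrix.of_apply, Matrix.mul_apply, Fintype.sum_prod_type]
  by_cases h : a = a' <;>
    simp [h, Finset.mul_sum, mul_comm, mul_left_comm, Finset.sum_ite_eq', mul_assoc]

lemma embB2_conjTranspose (X : Matrix B B ℂ) :
    (embB2 (A := A) X)ᴴ = embB2 Xᴴ := by
  ext ⟨a, b⟩ ⟨a', b'⟩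
  simp only [embB2, Matrix.conjTranspose_apply, Matrix.of_apply]
  by_cases h : a = a' <;> simp [h, eq_comm]

lemma trace_embB2 (W : Matrix B B ℂ) :
    (embB2 (A := A) W).trace = (Fintype.card A : ℂ) * W.trace := by
  simp [Matrix.trace, Matrix.diag, embB2, Fintype.sum_prod_type, Finset.sum_comm,
    Finset.mul_sum, Matrix.trace]

lemma trace_ptA2 (M : Matrix (A × B) (A × B) ℂ) : (ptA2 M).trace = M.trace := by
  simp [Matrix.trace, Matrix.diag, ptA2, Fintype.sum_prod_type]
  exact Finset.sum_comm

lemma trace_mul_embB2 (M : Matrix (A × B) (A × B) ℂ) (W : Matrix B B ℂ) :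
    (M * embB2 W).trace = ((ptA2 M) * W).trace := by
  simp only [Matrix.trace, Matrix.diag, Matrix.mul_apply, ptA2, embB2, Matrix.of_apply,
    Fintype.sum_prod_type]
  calc ∑ a : A, ∑ b : B, ∑ a2 : A, ∑ b3 : B, M (a, b) (a2, b3) *
        ((if a2 = a then (1:ℂ) else 0) * W b3 b)
      = ∑ a : A, ∑ b : B, ∑ b3 : B, M (a, b) (a, b3) * W b3 b := by
        refine Finset.sum_congr rfl fun a _ => Finset.sum_congr rfl fun b _ => ?_
        rw [Finset.sum_comm]
        refine Finset.sum_congr rfl fun b3 _ => ?_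
        simp only [ite_mul, one_mul, zero_mul, mul_ite, mul_zero, Finset.sum_ite_eq',
          Finset.mem_univ, if_true]
    _ = ∑ b : B, ∑ a : A, ∑ b3 : B, M (a, b) (a, b3) * W b3 b := Finset.sum_comm
    _ = ∑ b : B, ∑ b3 : B, ∑ a : A, M (a, b) (a, b3) * W b3 b :=
        Finset.sum_congr rfl fun b _ => Finset.sum_comm
    _ = ∑ b : B, ∑ b3 : B, (∑ a : A, M (a, b) (a, b3)) * W b3 b := by
        simp [Finset.sum_mul]

end Bipartite

theorem Phi_trace_increase_bound
    (ρ : Matrix (A × B) (A × B) ℂ)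
    (hρ : ρ.PosSemidef) (htr : ρ.trace = 1)
    (hB : (ptA2 ρ).PosDef) :
    ∀ X : Matrix B B ℂ, X.PosSemidef →
      ((embB2 hB.posSemidef.sqrt *
          (hρ.mul_mul_conjTranspose_same (embB2 (A := A) hB.inv.posSemidef.sqrt)).sqrt *
          embB2 hB.inv.posSemidef.sqrt * embB2 X * embB2 hB.inv.posSemidef.sqrt *
          (hρ.mul_mul_conjTranspose_same (embB2 (A := A) hB.inv.posSemidef.sqrt)).sqrt *
          embB2 hB.posSemidef.sqrt).trace).re ≤
        (Fintype.card A : ℝ) * opNorm (ptA2 ρ)⁻¹ * (X.trace).re := by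
  intro X hX
  set S := embB2 (A := A) hB.posSemidef.sqrt with hSdef
  set T := embB2 (A := A) hB.inv.posSemidef.sqrt with hTdef
  set M := (hρ.mul_mul_conjTranspose_same T).sqrt with hMdef
  set Y := embB2 (A := A) X with hYdef
  have hSH : Sᴴ = S := by
    rw [hSdef, embB2_conjTranspose, hB.posSemidef.posSemidef_sqrt.1.eq]
  have hTH : Tᴴ = T := by
    rw [hTdef, embB2_conjTranspose, hB.inv.posSemidef.posSemidef_sqrt.1.eq]
  have hMH : Mᴴ = M := (hρ.mul_mul_conjTranspose_same T).posSemidef_sqrt.1.eq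
  have hMM : M * M = T * ρ * Tᴴ := (hρ.mul_mul_conjTranspose_same T).sqrt_mul_self
  have hSS : S * S = embB2 (ptA2 ρ) := by
    rw [hSdef, ← embB2_mul, hB.posSemidef.sqrt_mul_self]
  have hTT : T * T = embB2 (ptA2 ρ)⁻¹ := by
    rw [hTdef, ← embB2_mul, hB.inv.posSemidef.sqrt_mul_self]
  set K1 := M * (T * (Y * (T * M))) with hK1def
  -- K1 is positive semidefinite
  have hK1psd : K1.PosSemidef := by
    have hW : (embB2 (A := A) hX.sqrt)ᴴ = embB2 hX.sqrt := by
      rw [embB2_conjTranspose, hX.posSemidef_sqrt.1.eq]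
    have hK1eq : K1 = (embB2 (A := A) hX.sqrt * (T * M))ᴴ *
        (embB2 (A := A) hX.sqrt * (T * M)) := by
      rw [conjTranspose_mul, conjTranspose_mul, hW, hTH, hMH]
      rw [hK1def, hYdef]
      conv_lhs => rw [← hX.sqrt_mul_self, embB2_mul]
      simp only [mul_assoc]
    rw [hK1eq]
    exact Matrix.posSemidef_conjTranspose_mul_self _
  -- the embedded reduced state is positive semidefinite
  have hEpsd : (embB2 (A := A) (ptA2 ρ)).PosSemidef := by
    have h := Matrix.posSemidef_conjTranspose_mul_self S
    rwa [hSH, hSS] at h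
  -- first trace identity
  have e1 : (S * M * T * Y * T * M * S).trace = (embB2 (A := A) (ptA2 ρ) * K1).trace := by
    rw [Matrix.trace_mul_comm, ← hSS, hK1def]
    simp only [mul_assoc]
  -- second trace identity
  have hdet : IsUnit (ptA2 ρ).det := hB.det_pos.ne'.isUnit
  have e2 : K1.trace = ((ptA2 ρ)⁻¹ * X).trace := by
    rw [hK1def, Matrix.trace_mul_comm]
    rw [show (T * (Y * (T * M))) * M = T * (Y * (T * (M * M))) by simp only [mul_assoc]]
    rw [hMM, hTH, Matrix.trace_mul_comm]
    rw [show (Y * (T * (T * ρ * T))) * T = Y * ((T * T) * (ρ * (T * T))) by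
      simp only [mul_assoc]]
    rw [hTT, Matrix.trace_mul_comm]
    rw [show (embB2 (A := A) (ptA2 ρ)⁻¹ * (ρ * embB2 (ptA2 ρ)⁻¹)) * Y
        = embB2 (ptA2 ρ)⁻¹ * (ρ * (embB2 (ptA2 ρ)⁻¹ * Y)) by simp only [mul_assoc]]
    rw [Matrix.trace_mul_comm]
    rw [show (ρ * (embB2 (A := A) (ptA2 ρ)⁻¹ * Y)) * embB2 (ptA2 ρ)⁻¹
        = ρ * (embB2 (ptA2 ρ)⁻¹ * (Y * embB2 (ptA2 ρ)⁻¹)) by simp only [mul_assoc]]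
    rw [hYdef, ← embB2_mul, ← embB2_mul, trace_mul_embB2, ← mul_assoc,
      Matrix.mul_nonsing_inv _ hdet, one_mul, Matrix.trace_mul_comm]
  -- trace of the embedded reduced state
  have htrE : ((embB2 (A := A) (ptA2 ρ)).trace).re = (Fintype.card A : ℝ) := by
    rw [trace_embB2, trace_ptA2, htr, mul_one]
    simp
  -- combine
  have hkey1 : ((S * M * T * Y * T * M * S).trace).re ≤
      (Fintype.card A : ℝ) * (K1.trace).re := by
    rw [e1, ← htrE]
    exact trace_mul_le_trace hEpsd hK1psd
  have hkey2 : (K1.trace).re ≤ opNorm (ptA2 ρ)⁻¹ * (X.trace).re := by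
    rw [e2]
    exact trace_mul_le_opNorm _ _ hX
  calc ((S * M * T * Y * T * M * S).trace).re
      ≤ (Fintype.card A : ℝ) * (K1.trace).re := hkey1
    _ ≤ (Fintype.card A : ℝ) * (opNorm (ptA2 ρ)⁻¹ * (X.trace).re) :=
        mul_le_mul_of_nonneg_left hkey2 (Nat.cast_nonneg _)
    _ = (Fintype.card A : ℝ) * opNorm (ptA2 ρ)⁻¹ * (X.trace).re := by ring

end BSQMC
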